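/- arXiv:2102.03159 — 5 statements merged into one kernel-verified Lean document; each statement's English description precedes it below -/
import Mathlib

section
/- Let ν be a probability measure on ℝ^{D−1} and C ≥ 0 be such that ν satisfies the Poincaré inequality: for every continuously differentiable u : ℝ^{D−1} → ℝ with u and ‖∇u‖ square-integrable with respect to ν, Var_ν(u) ≤ C ∫ ‖∇u‖² dν. Let G be a real orthogonal D×D matrix, d an index, t ∈ ℝ, and let ι_t : ℝ^{D−1} → ℝᴰ insert the value t at coordinate d. Let f : ℝᴰ → ℝ be continuously differentiable and define φ(z) = f(G⁻¹ ι_t(z)); assume φ and ‖∇φ‖ are square-integrable with respect to ν. Then Var_ν(φ) ≤ C ∫ ‖G_{∖d} ∇f(G⁻¹ ι_t(z))‖² dν(z), where G_{∖d} is G with row d deleted and ∇f denotes the gradient of f. -/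
open MeasureTheory ContinuousLinearMap InnerProductSpace
open scoped BigOperators Matrix

/-! The slice map `z ↦ G⁻¹ ι_t z` is affine with linear part `G⁻¹ ∘ ι₀`, where `ι₀` inserts a zero
coordinate at `d`, so the gradient of `φ` at `z` is the adjoint `ι₀† (G ∇f)` (using `G⁻¹ = Gᵀ`).
The adjoint of `ι₀` deletes coordinate `d`, so `‖∇φ‖²` is exactly the integrand on the right, and
the claim is the Poincaré inequality for `φ`. -/

theorem HasGradientAt.comp_continuousLinearMap_add_const
    {E F : Type*} [NormedAddCommGroup E] [InnerProductSpace ℝ E] [CompleteSpace E]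
    [NormedAddCommGroup F] [InnerProductSpace ℝ F] [CompleteSpace F]
    {f : F → ℝ} {g : F} (L : E →L[ℝ] F) (c : F) {z : E} (hf : HasGradientAt f g (L z + c)) :
    HasGradientAt (fun x => f (L x + c)) (adjoint L g) z := by
  rw [hasGradientAt_iff_hasFDerivAt] at hf ⊢
  refine (hf.comp z (L.hasFDerivAt.add_const c)).congr_fderiv ?_
  ext v
  simp [adjoint_inner_left]

theorem Matrix.adjoint_toEuclideanCLM_inv {n : Type*} [Fintype n] [DecidableEq n]
    {G : Matrix n n ℝ} (hG : Gᵀ * G = 1) :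
    adjoint (toEuclideanCLM (𝕜 := ℝ) G⁻¹) = toEuclideanCLM (𝕜 := ℝ) G := by
  rw [← star_eq_adjoint, ← map_star, Matrix.inv_eq_left_inv hG, star_eq_conjTranspose,
    conjTranspose_eq_transpose_of_trivial, transpose_transpose]

namespace EuclideanSpace

variable {n : ℕ}

noncomputable def insertNthCLM (d : Fin (n + 1)) :
    EuclideanSpace ℝ (Fin n) →L[ℝ] EuclideanSpace ℝ (Fin (n + 1)) :=
  LinearMap.toContinuousLinearMap
    { toFun := fun z => WithLp.toLp 2 (d.insertNth 0 z.ofLp)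
      map_add' := fun x y => by
        simp only [WithLp.ofLp_add, ← WithLp.toLp_add, ← Fin.insertNth_add, add_zero]
      map_smul' := fun c x => by
        ext i
        cases i using Fin.succAboveCases d <;> simp }

@[simp]
theorem insertNthCLM_apply (d : Fin (n + 1)) (z : EuclideanSpace ℝ (Fin n)) :
    insertNthCLM d z = WithLp.toLp 2 (d.insertNth 0 z.ofLp) := rfl

theorem toLp_insertNth (d : Fin (n + 1)) (t : ℝ) (z : EuclideanSpace ℝ (Fin n)) :
    WithLp.toLp 2 (d.insertNth t z.ofLp) = insertNthCLM d z + single d t := by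
  rw [insertNthCLM_apply, single, ← PiLp.toLp_single, ← Fin.insertNth_zero_right,
    ← WithLp.toLp_add, ← Fin.insertNth_add, zero_add, add_zero]

theorem adjoint_insertNthCLM_apply (d : Fin (n + 1)) (w : EuclideanSpace ℝ (Fin (n + 1))) :
    adjoint (insertNthCLM d) w = WithLp.toLp 2 (d.removeNth w.ofLp) := by
  refine ext_inner_right ℝ fun v => ?_
  rw [adjoint_inner_left, PiLp.inner_apply, PiLp.inner_apply, Fin.sum_univ_succAbove _ d]
  simp [Fin.removeNth]

theorem norm_sq_toLp_removeNth (d : Fin (n + 1)) (w : EuclideanSpace ℝ (Fin (n + 1))) :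
    ‖WithLp.toLp 2 (d.removeNth w.ofLp)‖ ^ 2 = ∑ i ∈ Finset.univ.erase d, w i ^ 2 := by
  rw [norm_sq_eq, ← add_right_inj (w d ^ 2),
    Finset.add_sum_erase _ (fun i => w i ^ 2) (Finset.mem_univ d), Fin.sum_univ_succAbove _ d]
  simp [Fin.removeNth]

end EuclideanSpace

theorem subspace_poincare_inequality_general
    (D : ℕ)
    (ν : Measure (EuclideanSpace ℝ (Fin D)))
    (C : ℝ)
    (hPoincare : ∀ u : EuclideanSpace ℝ (Fin D) → ℝ,
      ContDiff ℝ 1 u → MemLp u 2 ν → MemLp (fun z => ‖gradient u z‖) 2 ν →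
      (∫ z, (u z) ^ 2 ∂ν) - (∫ z, u z ∂ν) ^ 2 ≤ C * ∫ z, ‖gradient u z‖ ^ 2 ∂ν)
    (G : Matrix (Fin (D + 1)) (Fin (D + 1)) ℝ) (hG : Gᵀ * G = 1 ∧ G * Gᵀ = 1)
    (d : Fin (D + 1)) (t : ℝ)
    (f : EuclideanSpace ℝ (Fin (D + 1)) → ℝ) (hf : ContDiff ℝ 1 f)
    (φ : EuclideanSpace ℝ (Fin D) → ℝ)
    (hφ_def : ∀ z, φ z =
      f (WithLp.toLp 2 (G⁻¹ *ᵥ d.insertNth t fun j => z j : Fin (D + 1) → ℝ) :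
        EuclideanSpace ℝ (Fin (D + 1))))
    (hφ_L2 : MemLp φ 2 ν)
    (hφ_grad_L2 : MemLp (fun z => ‖gradient φ z‖) 2 ν) :
    (∫ z, (φ z) ^ 2 ∂ν) - (∫ z, φ z ∂ν) ^ 2 ≤
      C * ∫ z, ∑ i ∈ Finset.univ.erase d,
        (∑ j, G i j *
          gradient f (WithLp.toLp 2 (G⁻¹ *ᵥ d.insertNth t fun k => z k : Fin (D + 1) → ℝ) :
            EuclideanSpace ℝ (Fin (D + 1))) j) ^ 2 ∂ν := by
  set M := Matrix.toEuclideanCLM (𝕜 := ℝ) G⁻¹ ∘L EuclideanSpace.insertNthCLM d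
  set c := Matrix.toEuclideanCLM (𝕜 := ℝ) G⁻¹ (EuclideanSpace.single d t)
  have hslice : ∀ z : EuclideanSpace ℝ (Fin D),
      WithLp.toLp 2 (G⁻¹ *ᵥ d.insertNth t fun j => z j) = M z + c := fun z => by
    rw [← Matrix.toEuclideanCLM_toLp, EuclideanSpace.toLp_insertNth, map_add, comp_apply]
  have hφ : φ = fun z => f (M z + c) := funext fun z => (hφ_def z).trans (congrArg f (hslice z))
  have hgrad_sq : ∀ z, ‖gradient φ z‖ ^ 2 = ∑ i ∈ Finset.univ.erase d,
      (∑ j, G i j * gradient f (WithLp.toLp 2 (G⁻¹ *ᵥ d.insertNth t fun k => z k)) j) ^ 2 := by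
    intro z
    rw [hφ, ((hf.differentiable one_ne_zero _).hasGradientAt.comp_continuousLinearMap_add_const
      M c).gradient, adjoint_comp, Matrix.adjoint_toEuclideanCLM_inv hG.1, comp_apply,
      EuclideanSpace.adjoint_insertNthCLM_apply, EuclideanSpace.norm_sq_toLp_removeNth, hslice]
    simp only [Matrix.ofLp_toEuclideanCLM, Matrix.mulVec, dotProduct]
  have hφ_smooth : ContDiff ℝ 1 φ := hφ ▸ hf.comp (M.contDiff.add contDiff_const)
  calc _ ≤ C * ∫ z, ‖gradient φ z‖ ^ 2 ∂ν := hPoincare φ hφ_smooth hφ_L2 hφ_grad_L2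
    _ = _ := by simp_rw [hgrad_sq]

/-- Subspace Poincaré inequality: if `ν` satisfies a Poincaré inequality with
constant `C` on `ℝ^D`, `G` is an orthogonal `(D+1)×(D+1)` matrix, and
`φ(z) = f(G⁻¹ ι_t(z))` with `ι_t` inserting value `t` at coordinate `d`, then the
variance of `φ` under `ν` is bounded by `C` times the `ν`-integral of the squared
norm of the gradient of `f` projected by `G` with row `d` deleted. -/
theorem subspace_poincare_inequality
    (D : ℕ)
    (ν : Measure (EuclideanSpace ℝ (Fin D))) [IsProbabilityMeasure ν]
    (C : ℝ) (hC : 0 ≤ C)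
    (hPoincare : ∀ u : EuclideanSpace ℝ (Fin D) → ℝ,
      ContDiff ℝ 1 u → MemLp u 2 ν → MemLp (fun z => ‖gradient u z‖) 2 ν →
      (∫ z, (u z) ^ 2 ∂ν) - (∫ z, u z ∂ν) ^ 2 ≤ C * ∫ z, ‖gradient u z‖ ^ 2 ∂ν)
    (G : Matrix (Fin (D + 1)) (Fin (D + 1)) ℝ) (hG : Gᵀ * G = 1 ∧ G * Gᵀ = 1)
    (d : Fin (D + 1)) (t : ℝ)
    (f : EuclideanSpace ℝ (Fin (D + 1)) → ℝ) (hf : ContDiff ℝ 1 f)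
    (φ : EuclideanSpace ℝ (Fin D) → ℝ)
    (hφ_def : ∀ z, φ z =
      f (WithLp.toLp 2 (G⁻¹ *ᵥ d.insertNth t fun j => z j : Fin (D + 1) → ℝ) :
        EuclideanSpace ℝ (Fin (D + 1))))
    (hφ_L2 : MemLp φ 2 ν)
    (hφ_grad_L2 : MemLp (fun z => ‖gradient φ z‖) 2 ν) :
    (∫ z, (φ z) ^ 2 ∂ν) - (∫ z, φ z ∂ν) ^ 2 ≤
      C * ∫ z, ∑ i ∈ Finset.univ.erase d,
        (∑ j, G i j *
          gradient f (WithLp.toLp 2 (G⁻¹ *ᵥ d.insertNth t fun k => z k : Fin (D + 1) → ℝ) :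
            EuclideanSpace ℝ (Fin (D + 1))) j) ^ 2 ∂ν :=
  subspace_poincare_inequality_general D ν C hPoincare G hG d t f hf φ hφ_def hφ_L2 hφ_grad_L2
end

section
/- Let μ be a finite measure on EuclideanSpace ℝ (Fin D) with bounded support, let w : EuclideanSpace ℝ (Fin D) → ℝ be bounded and measurable, and let φ : ℝ → ℝ be real analytic on all of ℝ. Then the function Ψ : EuclideanSpace ℝ (Fin D) → ℝ defined by Ψ(g) = ∫∫ w(x) · φ(⟪x − x', g⟫) · w(x') dμ(x) dμ(x') is real analytic on all of EuclideanSpace ℝ (Fin D). -/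
/-!
Near `g₀`, each integrand `g ↦ φ ⟪x - x', g⟫` is the Taylor series of `φ` at `⟪x - x', g₀⟫`
composed with the linear form `⟪x - x', ·⟫`, whose norm is bounded on the support of `μ ⊗ μ`.
The base points range over a compact interval on which `φ` is analytic, so these Taylor series
have a common radius `r` and a common bound `‖Dⁿφ(t)/n!‖ rⁿ ≤ C`; near a single point this
uniformity comes from the change-of-origin estimates. The terms of the composed series are then
dominated by a geometric series, and dominated convergence integrates the series term by term,
exhibiting `Ψ` as the sum of a power series around `g₀`.
-/

open MeasureTheory Filter Topology
open scoped NNReal ENNReal RealInnerProductSpace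

section

variable {𝕜 E F G : Type*} [NontriviallyNormedField 𝕜] [NormedAddCommGroup E] [NormedSpace 𝕜 E]
  [NormedAddCommGroup F] [NormedSpace 𝕜 F] [NormedAddCommGroup G] [NormedSpace 𝕜 G]

namespace FormalMultilinearSeries

theorem nnnorm_changeOrigin_mul_pow_le (p : FormalMultilinearSeries 𝕜 E F) {r r' : ℝ≥0}
    (hr : (r + r' : ℝ≥0∞) < p.radius) {x : E} (hx : ‖x‖₊ ≤ r) (k : ℕ) :
    ‖p.changeOrigin x k‖₊ * r' ^ k ≤
      ∑' s : Σ k l : ℕ, { s : Finset (Fin (k + l)) // s.card = l },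
        ‖p (s.1 + s.2.1)‖₊ * r ^ s.2.1 * r' ^ s.1 := by
  have hr_lt : (r : ℝ≥0∞) < p.radius := lt_of_le_of_lt (by simp) hr
  have hx_lt : (‖x‖₊ : ℝ≥0∞) < p.radius := lt_of_le_of_lt (by exact_mod_cast hx) hr_lt
  calc ‖p.changeOrigin x k‖₊ * r' ^ k
      ≤ (∑' s : Σ l : ℕ, { s : Finset (Fin (k + l)) // s.card = l },
          ‖p (k + s.1)‖₊ * ‖x‖₊ ^ s.1) * r' ^ k := by
        gcongr
        exact p.nnnorm_changeOrigin_le k hx_lt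
    _ ≤ (∑' s : Σ l : ℕ, { s : Finset (Fin (k + l)) // s.card = l },
          ‖p (k + s.1)‖₊ * r ^ s.1) * r' ^ k := by
        gcongr ?_ * _
        exact (p.changeOriginSeries_summable_aux₂ hx_lt k).tsum_le_tsum
          (fun s => by gcongr) (p.changeOriginSeries_summable_aux₂ hr_lt k)
    _ = ∑' s : Σ l : ℕ, { s : Finset (Fin (k + l)) // s.card = l },
          ‖p (k + s.1)‖₊ * r ^ s.1 * r' ^ k := (NNReal.tsum_mul_right _ _).symm
    _ ≤ _ := NNReal.tsum_comp_le_tsum_of_inj (p.changeOriginSeries_summable_aux₁ hr)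
        (i := Sigma.mk k) sigma_mk_injective

theorem norm_compContinuousLinearMap_mul_pow_le (p : FormalMultilinearSeries 𝕜 F G)
    (u : E →L[𝕜] F) (n : ℕ) {ρ r : ℝ} (hρ : 0 ≤ ρ) (hu : ‖u‖ * ρ ≤ r) :
    ‖p.compContinuousLinearMap u n‖ * ρ ^ n ≤ ‖p n‖ * r ^ n :=
  calc ‖p.compContinuousLinearMap u n‖ * ρ ^ n ≤ (‖p n‖ * ∏ _i : Fin n, ‖u‖) * ρ ^ n := by
        gcongr
        exact ContinuousMultilinearMap.norm_compContinuousLinearMap_le _ _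
    _ = ‖p n‖ * (‖u‖ * ρ) ^ n := by rw [Finset.prod_const, Finset.card_fin, mul_pow, mul_assoc]
    _ ≤ ‖p n‖ * r ^ n := by gcongr

end FormalMultilinearSeries

theorem HasFPowerSeriesOnBall.compContinuousLinearMap_of_mul_le {u : E →L[𝕜] F} {f : F → G}
    {pf : FormalMultilinearSeries 𝕜 F G} {x : E} {r ρ : ℝ≥0}
    (hf : HasFPowerSeriesOnBall f pf (u x) r) (hρ : 0 < ρ) (hu : ‖u‖₊ * ρ ≤ r) :
    HasFPowerSeriesOnBall (f ∘ u) (pf.compContinuousLinearMap u) x ρ := by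
  refine hf.compContinuousLinearMap.mono (ENNReal.coe_pos.2 hρ) ?_
  rcases eq_or_ne r 0 with rfl | hr
  · exact absurd hf.r_pos (by simp)
  rw [ENNReal.le_div_iff_mul_le (Or.inr (ENNReal.coe_ne_zero.2 hr)) (Or.inl enorm_ne_top),
    enorm_eq_nnnorm, ← ENNReal.coe_mul, ENNReal.coe_le_coe, mul_comm]
  exact hu

variable (𝕜) in
/-- Unlike `ftaylorSeries`, the `n`-th term is divided by `n!`, so that this is the power series of
an analytic function of one variable (`HasFPowerSeriesOnBall.eq_taylorSeries`). -/
noncomputable def taylorSeries (f : E → F) (x : E) : FormalMultilinearSeries 𝕜 E F :=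
  fun n => (n.factorial : 𝕜)⁻¹ • iteratedFDeriv 𝕜 n f x

theorem continuous_taylorSeries {f : E → F} {m : WithTop ℕ∞} (hf : ContDiff 𝕜 m f) {n : ℕ}
    (hn : n ≤ m) : Continuous fun x => taylorSeries 𝕜 f x n :=
  (hf.continuous_iteratedFDeriv hn).const_smul ((n.factorial : 𝕜)⁻¹)

theorem continuous_taylorSeries_compContinuousLinearMap {f : 𝕜 → G} {m : WithTop ℕ∞}
    (hf : ContDiff 𝕜 m f) {n : ℕ} (hn : n ≤ m) (x : E) :
    Continuous fun L : E →L[𝕜] 𝕜 => (taylorSeries 𝕜 f (L x)).compContinuousLinearMap L n :=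
  ((ContinuousMultilinearMap.compContinuousLinearMapContinuousMultilinear 𝕜
      (fun _ : Fin n => E) (fun _ => 𝕜) G).cont.comp
        (continuous_pi fun _ => continuous_id)).clm_apply
    ((continuous_taylorSeries hf hn).comp (ContinuousLinearMap.apply 𝕜 𝕜 x).continuous)

variable (𝕜) in
def HasTaylorBoundOnBall (f : E → F) (y : E) (r : ℝ≥0) (C : ℝ) : Prop :=
  HasFPowerSeriesOnBall f (taylorSeries 𝕜 f y) y r ∧ ∀ n, ‖taylorSeries 𝕜 f y n‖ * r ^ n ≤ C

theorem HasTaylorBoundOnBall.mono {f : E → F} {y : E} {r r' : ℝ≥0} {C C' : ℝ}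
    (h : HasTaylorBoundOnBall 𝕜 f y r C) (hr' : 0 < r') (hr : r' ≤ r) (hC : C ≤ C') :
    HasTaylorBoundOnBall 𝕜 f y r' C' :=
  ⟨h.1.mono (ENNReal.coe_pos.2 hr') (ENNReal.coe_le_coe.2 hr), fun n =>
    calc _ ≤ ‖taylorSeries 𝕜 f y n‖ * r ^ n := by gcongr
      _ ≤ C' := (h.2 n).trans hC⟩

section OneDimensional

variable [CharZero 𝕜] [CompleteSpace F] {f : 𝕜 → F}

theorem HasFPowerSeriesOnBall.eq_taylorSeries {p : FormalMultilinearSeries 𝕜 𝕜 F}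
    {x : 𝕜} {r : ℝ≥0∞} (h : HasFPowerSeriesOnBall f p x r) : p = taylorSeries 𝕜 f x := by
  ext n
  have hn : (n.factorial : 𝕜) ≠ 0 := by exact_mod_cast n.factorial_ne_zero
  have hcoeff : p.coeff n = (taylorSeries 𝕜 f x).coeff n := by
    change p n (fun _ => 1) = (n.factorial : 𝕜)⁻¹ • iteratedFDeriv 𝕜 n f x (fun _ => 1)
    rw [← h.factorial_smul, ← Nat.cast_smul_eq_nsmul 𝕜, smul_smul, inv_mul_cancel₀ hn, one_smul]
  rw [FormalMultilinearSeries.apply_eq_prod_smul_coeff,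
    FormalMultilinearSeries.apply_eq_prod_smul_coeff, hcoeff]

theorem AnalyticAt.eventually_hasTaylorBoundOnBall {x : 𝕜} (h : AnalyticAt 𝕜 f x) :
    ∃ r : ℝ≥0, 0 < r ∧ ∃ C : ℝ, ∀ᶠ y in 𝓝 x, HasTaylorBoundOnBall 𝕜 f y r C := by
  obtain ⟨p, R, hp⟩ := h
  obtain ⟨ε, hε0, hεR⟩ := ENNReal.lt_iff_exists_nnreal_btwn.1 hp.r_pos
  -- `r + r < p.radius` feeds the change-of-origin bound, the third `r` is the new radius.
  set r := ε / 3
  have hr0 : 0 < r := div_pos (by exact_mod_cast hε0) three_pos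
  have h3r : ((r + r : ℝ≥0) : ℝ≥0∞) + r < R := by
    have : r + r + r = ε := by simp only [r]; ring
    rwa [← ENNReal.coe_add, this]
  have h2r : ((r + r : ℝ≥0) : ℝ≥0∞) < p.radius :=
    lt_of_le_of_lt le_self_add (h3r.trans_le hp.r_le)
  refine ⟨r, hr0, ∑' s : Σ k l : ℕ, { s : Finset (Fin (k + l)) // s.card = l },
    ‖p (s.1 + s.2.1)‖₊ * r ^ s.2.1 * r ^ s.1,
    eventually_of_mem (Metric.ball_mem_nhds x hr0) fun y hy => ?_⟩
  have hyx : ‖y - x‖₊ < r := by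
    rw [← NNReal.coe_lt_coe, coe_nnnorm, ← dist_eq_norm]; exact hy
  have hyR : (‖y - x‖₊ : ℝ≥0∞) + r < R := by
    refine lt_of_le_of_lt ?_ h3r
    gcongr
    exact_mod_cast hyx.le.trans le_self_add
  have hball := hp.changeOrigin (lt_of_le_of_lt le_self_add hyR)
  rw [add_sub_cancel] at hball
  have hy_eq := hball.eq_taylorSeries
  refine ⟨hy_eq ▸ hball.mono (by exact_mod_cast hr0)
    (ENNReal.le_sub_of_add_le_left ENNReal.coe_ne_top hyR.le), fun n => ?_⟩
  rw [← hy_eq]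
  exact_mod_cast p.nnnorm_changeOrigin_mul_pow_le (by exact_mod_cast h2r) hyx.le n

theorem IsCompact.exists_hasTaylorBoundOnBall {K : Set 𝕜} (hK : IsCompact K)
    (hf : AnalyticOnNhd 𝕜 f K) :
    ∃ r : ℝ≥0, 0 < r ∧ ∃ C : ℝ, ∀ y ∈ K, HasTaylorBoundOnBall 𝕜 f y r C := by
  refine hK.induction_on ⟨1, one_pos, 0, by simp⟩
    (fun s t hst ⟨r, hr, C, hC⟩ => ⟨r, hr, C, fun y hy => hC y (hst hy)⟩) ?_
    (fun x hx => ?_)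
  · rintro s t ⟨r₁, hr₁, C₁, hC₁⟩ ⟨r₂, hr₂, C₂, hC₂⟩
    refine ⟨min r₁ r₂, lt_min hr₁ hr₂, max C₁ C₂, ?_⟩
    rintro y (hy | hy)
    · exact (hC₁ y hy).mono (lt_min hr₁ hr₂) (min_le_left _ _) (le_max_left _ _)
    · exact (hC₂ y hy).mono (lt_min hr₁ hr₂) (min_le_right _ _) (le_max_right _ _)
  · obtain ⟨r, hr, C, hC⟩ := (hf x hx).eventually_hasTaylorBoundOnBall
    exact ⟨_, mem_nhdsWithin_of_mem_nhds hC, r, hr, C, fun y hy => hy⟩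

end OneDimensional

end

theorem hasFPowerSeriesOnBall_integral {α E G : Type*} [MeasurableSpace α] {ν : Measure α}
    [NormedAddCommGroup E] [NormedSpace ℝ E] [NormedAddCommGroup G] [NormedSpace ℝ G]
    [CompleteSpace G] {f : α → E → G} {p : α → FormalMultilinearSeries ℝ E G} {x : E}
    {r : ℝ≥0} (hr : 0 < r) (hf : ∀ᵐ z ∂ν, HasFPowerSeriesOnBall (f z) (p z) x r)
    (hp : ∀ n, AEStronglyMeasurable (fun z => p z n) ν) {B : α → ℝ} (hB : Integrable B ν)
    (hpB : ∀ᵐ z ∂ν, ∀ n, ‖p z n‖ * r ^ n ≤ B z) :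
    HasFPowerSeriesOnBall (fun y => ∫ z, f z y ∂ν) (fun n => ∫ z, p z n ∂ν) x r := by
  have hr' : (0 : ℝ) < r := hr
  have hp_le : ∀ n, ∀ᵐ z ∂ν, ‖p z n‖ ≤ B z / r ^ n := fun n => by
    filter_upwards [hpB] with z hz
    rw [le_div_iff₀ (by positivity)]
    exact hz n
  have hp_int : ∀ n, Integrable (fun z => p z n) ν := fun n =>
    (hB.div_const _).mono' (hp n) (hp_le n)
  refine ⟨FormalMultilinearSeries.le_radius_of_bound _ (∫ z, B z ∂ν) fun n => ?_,
    ENNReal.coe_pos.2 hr, ?_⟩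
  · calc ‖∫ z, p z n ∂ν‖ * r ^ n ≤ (∫ z, B z / r ^ n ∂ν) * r ^ n := by
          gcongr
          exact norm_integral_le_of_norm_le (hB.div_const _) (hp_le n)
      _ = ∫ z, B z ∂ν := by
          rw [integral_div, div_mul_cancel₀ _ (by positivity)]
  · intro y hy
    have hy' : ‖y‖ < r := by simpa using hy
    set τ := ‖y‖ / r
    have hτ0 : 0 ≤ τ := by positivity
    have hτ1 : τ < 1 := (div_lt_one hr').2 hy'
    simp only [ContinuousMultilinearMap.integral_apply (hp_int _)]
    refine hasSum_integral_of_dominated_convergence (fun n z => B z * τ ^ n)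
      (fun n => ?_) (fun n => ?_) (ae_of_all _ fun z => ?_) ?_ ?_
    · exact (ContinuousMultilinearMap.apply ℝ _ G _).continuous.comp_aestronglyMeasurable (hp n)
    · filter_upwards [hp_le n] with z hz
      calc ‖p z n fun _ => y‖ ≤ ‖p z n‖ * ‖y‖ ^ n :=
            (p z n).le_opNorm_mul_pow_of_le (pi_norm_const_le y)
        _ ≤ B z / r ^ n * ‖y‖ ^ n := by gcongr
        _ = B z * τ ^ n := by rw [div_pow]; ring
    · exact (summable_geometric_of_lt_one hτ0 hτ1).mul_left _
    · simp only [tsum_mul_left, tsum_geometric_of_lt_one hτ0 hτ1]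
      exact hB.mul_const _
    · filter_upwards [hf] with z hz
      exact hz.hasSum hy

section RidgeIntegral

variable {α E G : Type*} [MeasurableSpace α] {ν : Measure α} [NormedAddCommGroup E]
  [NormedSpace ℝ E] [NormedAddCommGroup G] [NormedSpace ℝ G] {φ : ℝ → G} {k : α → ℝ}
  {ℓ : α → E →L[ℝ] ℝ} {R : ℝ}

theorem integrable_smul_comp_clm (hφ : Continuous φ) (hk : Integrable k ν)
    (hℓ : AEStronglyMeasurable ℓ ν) (hℓR : ∀ᵐ z ∂ν, ‖ℓ z‖ ≤ R) (g : E) :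
    Integrable (fun z => k z • φ (ℓ z g)) ν := by
  obtain ⟨C, hC⟩ := (isCompact_closedBall (0 : ℝ) (R * ‖g‖)).exists_bound_of_continuousOn
    hφ.continuousOn
  refine hk.smul_of_top_left (memLp_top_of_bound (hφ.comp_aestronglyMeasurable
    ((ContinuousLinearMap.apply ℝ ℝ g).continuous.comp_aestronglyMeasurable hℓ)) C ?_)
  filter_upwards [hℓR] with z hz
  exact hC _ (mem_closedBall_zero_iff.2 ((ℓ z).le_of_opNorm_le hz g))

theorem analyticOnNhd_integral_smul_comp_clm [CompleteSpace G]
    (hφ : AnalyticOnNhd ℝ φ Set.univ) (hk : Integrable k ν) (hℓ : AEStronglyMeasurable ℓ ν)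
    (hℓR : ∀ᵐ z ∂ν, ‖ℓ z‖ ≤ R) :
    AnalyticOnNhd ℝ (fun g => ∫ z, k z • φ (ℓ z g) ∂ν) Set.univ := by
  intro x _
  obtain ⟨r, hr, C, hC⟩ := (isCompact_closedBall (0 : ℝ) (R * ‖x‖)).exists_hasTaylorBoundOnBall
    (hφ.mono (Set.subset_univ _))
  have hLx : ∀ L : E →L[ℝ] ℝ, ‖L‖ ≤ R → L x ∈ Metric.closedBall (0 : ℝ) (R * ‖x‖) :=
    fun L hL => mem_closedBall_zero_iff.2 (L.le_of_opNorm_le hL x)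
  set ρ : ℝ≥0 := r / (R.toNNReal + 1)
  have hρ : 0 < ρ := by positivity
  have hLρ : ∀ L : E →L[ℝ] ℝ, ‖L‖ ≤ R → ‖L‖ * ρ ≤ r := fun L hL => by
    have hρ' : (ρ : ℝ) = r / (max R 0 + 1) := by simp [ρ, Real.coe_toNNReal']
    rw [hρ', ← mul_div_assoc, div_le_iff₀ (by positivity)]
    nlinarith [le_max_left R 0, r.coe_nonneg, norm_nonneg L]
  refine ⟨_, _, hasFPowerSeriesOnBall_integral
    (p := fun z => k z • (taylorSeries ℝ φ (ℓ z x)).compContinuousLinearMap (ℓ z))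
    (B := fun z => ‖k z‖ * C) hρ ?_
    (fun n => hk.aestronglyMeasurable.smul <| Continuous.comp_aestronglyMeasurable
      (continuous_taylorSeries_compContinuousLinearMap hφ.contDiff le_top x) hℓ)
    (hk.norm.mul_const C) ?_⟩
  · filter_upwards [hℓR] with z hz
    exact ((hC _ (hLx _ hz)).1.compContinuousLinearMap_of_mul_le hρ
      (by exact_mod_cast hLρ _ hz)).const_smul
  · filter_upwards [hℓR] with z hz n
    calc ‖k z • (taylorSeries ℝ φ (ℓ z x)).compContinuousLinearMap (ℓ z) n‖ * ρ ^ n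
        = ‖k z‖ * (‖(taylorSeries ℝ φ (ℓ z x)).compContinuousLinearMap (ℓ z) n‖ * ρ ^ n) := by
          rw [norm_smul, mul_assoc]
      _ ≤ ‖k z‖ * (‖taylorSeries ℝ φ (ℓ z x) n‖ * r ^ n) := mul_le_mul_of_nonneg_left
          ((taylorSeries ℝ φ (ℓ z x)).norm_compContinuousLinearMap_mul_pow_le (ℓ z) n
            ρ.coe_nonneg (hLρ _ hz)) (norm_nonneg _)
      _ ≤ ‖k z‖ * C := mul_le_mul_of_nonneg_left ((hC _ (hLx _ hz)).2 n) (norm_nonneg _)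

end RidgeIntegral

theorem ae_prod_norm_sub_le {X : Type*} [SeminormedAddCommGroup X] [MeasurableSpace X]
    {μ ν : Measure X} {s : Set X} {R : ℝ} (hR : ∀ x ∈ s, ‖x‖ ≤ R) (hμ : μ sᶜ = 0)
    (hν : ν sᶜ = 0) : ∀ᵐ z ∂(μ.prod ν), ‖z.1 - z.2‖ ≤ R + R := by
  filter_upwards [Measure.quasiMeasurePreserving_fst.ae (mem_ae_iff.2 hμ),
    Measure.quasiMeasurePreserving_snd.ae (mem_ae_iff.2 hν)] with z h₁ h₂
  exact (norm_sub_le _ _).trans (add_le_add (hR _ h₁) (hR _ h₂))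

/-- Real analyticity of the sliced kernelized Stein discrepancy in the slice
direction: for a finite measure `μ` with bounded support, a bounded measurable
weight `w`, and an entire real analytic `φ`, the function
`Ψ(g) = ∫∫ w(x) φ(⟪x − x', g⟫) w(x') dμ(x) dμ(x')` is real analytic on all of
`EuclideanSpace ℝ (Fin D)`. -/
theorem sksd_real_analytic
    (D : ℕ)
    (μ : Measure (EuclideanSpace ℝ (Fin D))) [IsFiniteMeasure μ]
    (hsupp : ∃ s : Set (EuclideanSpace ℝ (Fin D)), Bornology.IsBounded s ∧ μ sᶜ = 0)
    (w : EuclideanSpace ℝ (Fin D) → ℝ) (hw_meas : Measurable w)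
    (hw_bdd : ∃ Cw : ℝ, ∀ x, |w x| ≤ Cw)
    (φ : ℝ → ℝ) (hφ : AnalyticOnNhd ℝ φ Set.univ)
    (Ψ : EuclideanSpace ℝ (Fin D) → ℝ)
    (hΨ_def : ∀ g, Ψ g = ∫ x, ∫ x', w x * φ ⟪x - x', g⟫ * w x' ∂μ ∂μ) :
    AnalyticOnNhd ℝ Ψ Set.univ := by
  obtain ⟨s, hs_bdd, hs_null⟩ := hsupp
  obtain ⟨R, hR⟩ := isBounded_iff_forall_norm_le.1 hs_bdd
  obtain ⟨Cw, hCw⟩ := hw_bdd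
  have hw : Integrable w μ := Integrable.of_bound hw_meas.aestronglyMeasurable Cw
    (ae_of_all _ fun x => (Real.norm_eq_abs _).trans_le (hCw x))
  have hℓR : ∀ᵐ z ∂(μ.prod μ), ‖innerSL ℝ (z.1 - z.2)‖ ≤ R + R := by
    simpa only [innerSL_apply_norm] using ae_prod_norm_sub_le hR hs_null hs_null
  have hℓ : AEStronglyMeasurable (fun z : _ × _ => innerSL ℝ (z.1 - z.2)) (μ.prod μ) :=
    ((innerSL ℝ).continuous.comp (continuous_fst.sub continuous_snd)).aestronglyMeasurable
  have hΨ : Ψ = fun g => ∫ z, (w z.1 * w z.2) • φ (innerSL ℝ (z.1 - z.2) g) ∂(μ.prod μ) := by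
    funext g
    have hint := integrable_smul_comp_clm hφ.continuous (hw.mul_prod hw) hℓ hℓR g
    have hfun : (fun z : _ × _ => (w z.1 * w z.2) • φ (innerSL ℝ (z.1 - z.2) g)) =
        fun z => w z.1 * φ ⟪z.1 - z.2, g⟫ * w z.2 := by
      funext z
      rw [innerSL_apply_apply, smul_eq_mul]
      ring
    rw [hfun] at hint ⊢
    exact (hΨ_def g).trans (integral_integral hint)
  rw [hΨ]
  exact analyticOnNhd_integral_smul_comp_clm hφ (hw.mul_prod hw) hℓ hℓR
end

section
/- Let U ⊆ ℝᵈ be a nonempty connected open set and let f : ℝᵈ → ℝ be real analytic at every point of U. If f is not identically zero on U (i.e., there exists x₀ ∈ U with f(x₀) ≠ 0), then the zero set {x ∈ U : f(x) = 0} has d-dimensional Lebesgue measure zero. -/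
/-!
Slice and induct on the dimension. Write a sup-norm ball of `ℝⁿ⁺¹` as `I × B` with `I ⊆ ℝ` an
interval and `B ⊆ ℝⁿ` a ball, and pick `(t₀, y₀)` with `g (t₀, y₀) ≠ 0`. The one-variable analytic
function `g (·, y₀)` has isolated, hence countably many, zeros in `I`; for every other `t ∈ I`,
`g (t, ·)` does not vanish identically on `B`, so by induction its zero set is null. Fubini makes
the zero set of `g` on `I × B` null. Finally, by the identity theorem `f` vanishes identically on
no ball inside the connected set `U`, and countably many balls cover `U`.
-/

open MeasureTheory Metric Set Filter Topology

theorem AnalyticOnNhd.countable_setOf_eq_zero {𝕜 E : Type*} [NontriviallyNormedField 𝕜]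
    [SecondCountableTopology 𝕜] [NormedAddCommGroup E] [NormedSpace 𝕜 E] {f : 𝕜 → E}
    {U : Set 𝕜} (hf : AnalyticOnNhd 𝕜 f U) (hU : IsPreconnected U) (hne : ∃ z ∈ U, f z ≠ 0) :
    {z ∈ U | f z = 0}.Countable := by
  refine (HereditarilyLindelofSpace.isLindelof _).countable_of_isDiscrete
    (isDiscrete_iff_nhdsNE.2 fun z hz ↦ ?_)
  obtain ⟨z₀, hz₀, hfz₀⟩ := hne
  rcases (hf z hz.1).eventually_eq_zero_or_eventually_ne_zero with hzero | hnonzero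
  · exact absurd (hf.eqOn_zero_of_preconnected_of_eventuallyEq_zero hU hz.1 hzero hz₀) hfz₀
  · rw [inf_principal_eq_bot]
    filter_upwards [hnonzero] with w hw using fun hw' ↦ hw hw'.2

variable {E F : Type*} [NormedAddCommGroup E] [NormedSpace ℝ E] [MeasurableSpace E]
  [NormedAddCommGroup F] [NormedSpace ℝ F] [MeasurableSpace F]

def HasNullAnalyticZeros (μ : Measure E) (s : Set E) : Prop :=
  ∀ g : E → ℝ, AnalyticOnNhd ℝ g s → (∃ x ∈ s, g x ≠ 0) → μ {x ∈ s | g x = 0} = 0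

theorem hasNullAnalyticZeros_of_isPreconnected {μ : Measure ℝ} [NullSingletonClass μ] {s : Set ℝ}
    (hs : IsPreconnected s) : HasNullAnalyticZeros μ s := fun _ hg hne ↦
  (hg.countable_setOf_eq_zero hs hne).measure_zero μ

theorem ContinuousOn.measurableSet_sep_eq {X Y : Type*} [TopologicalSpace X] [MeasurableSpace X]
    [OpensMeasurableSpace X] [TopologicalSpace Y] [T1Space Y] {g : X → Y} {s : Set X}
    (hg : ContinuousOn g s) (hs : IsOpen s) (y : Y) : MeasurableSet {x ∈ s | g x = y} := by
  have hopen : IsOpen (s ∩ g ⁻¹' {y}ᶜ) := hg.isOpen_inter_preimage hs isOpen_compl_singleton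
  convert hs.measurableSet.diff hopen.measurableSet using 1
  ext x
  simp

theorem HasNullAnalyticZeros.prod [BorelSpace E] [BorelSpace F] [SecondCountableTopologyEither E F]
    {μ : Measure E} {ν : Measure F} {s : Set E} {t : Set F}
    (hs : HasNullAnalyticZeros μ s) (ht : HasNullAnalyticZeros ν t) (hs_open : IsOpen s)
    (ht_open : IsOpen t) : HasNullAnalyticZeros (μ.prod ν) (s ×ˢ t) := by
  rintro g hg ⟨⟨x₀, y₀⟩, ⟨hx₀, hy₀⟩, hg₀⟩
  have hg_left : ∀ y ∈ t, AnalyticOnNhd ℝ (fun x ↦ g (x, y)) s := fun y hy x hx ↦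
    (hg _ ⟨hx, hy⟩).comp₂ analyticAt_id analyticAt_const
  have hg_right : ∀ x ∈ s, AnalyticOnNhd ℝ (fun y ↦ g (x, y)) t := fun x hx y hy ↦
    (hg _ ⟨hx, hy⟩).comp₂ analyticAt_const analyticAt_id
  -- the slice over `x ∈ s` can only fail to be null when `g (x, ·)` vanishes on `t`
  have h_bad : μ {x ∈ s | g (x, y₀) = 0} = 0 := hs _ (hg_left y₀ hy₀) ⟨x₀, hx₀, hg₀⟩
  refine Measure.measure_prod_null_of_ae_null
    (hg.continuousOn.measurableSet_sep_eq (hs_open.prod ht_open) 0) ?_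
  filter_upwards [measure_eq_zero_iff_ae_notMem.1 h_bad] with x hx
  by_cases hxs : x ∈ s
  · have hne : ∃ y ∈ t, g (x, y) ≠ 0 := ⟨y₀, hy₀, fun h ↦ hx ⟨hxs, h⟩⟩
    simpa [hxs] using ht _ (hg_right x hxs) hne
  · simp [hxs]

theorem HasNullAnalyticZeros.preimage [BorelSpace E] [BorelSpace F] {μ : Measure E}
    {ν : Measure F} {t : Set F} (ht : HasNullAnalyticZeros ν t) (e : E ≃L[ℝ] F)
    (he : MeasurePreserving e μ ν) : HasNullAnalyticZeros μ (e ⁻¹' t) := by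
  rintro g hg ⟨x, hx, hgx⟩
  have hzeros : {x ∈ e ⁻¹' t | g x = 0} = e ⁻¹' {y ∈ t | g (e.symm y) = 0} := by
    ext; simp
  rw [hzeros, he.measure_preimage_emb e.toHomeomorph.measurableEmbedding]
  refine ht _ (fun y hy ↦ ?_) ⟨e x, hx, by simpa using hgx⟩
  exact (hg (e.symm y) (by simpa using hy)).comp ((e.symm : F →L[ℝ] E).analyticAt y)

theorem hasNullAnalyticZeros_of_locally [SecondCountableTopology E] {μ : Measure E} {U : Set E}
    (hU : IsPreconnected U) (hloc : ∀ x ∈ U, ∃ V ∈ 𝓝 x, V ⊆ U ∧ HasNullAnalyticZeros μ V) :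
    HasNullAnalyticZeros μ U := by
  rintro g hg ⟨x₀, hx₀, hgx₀⟩
  refine measure_null_of_locally_null _ fun x hx ↦ ?_
  obtain ⟨V, hV, hVU, hVnull⟩ := hloc x hx.1
  refine ⟨{z ∈ V | g z = 0}, mem_of_superset (inter_mem_nhdsWithin _ hV) fun z hz ↦ ⟨hz.2, hz.1.2⟩,
    hVnull g (hg.mono hVU) ?_⟩
  by_contra! hzero
  have hx_nhd : g =ᶠ[𝓝 x] 0 := eventually_of_mem hV hzero
  exact hgx₀ (hg.eqOn_zero_of_preconnected_of_eventuallyEq_zero hU hx.1 hx_nhd hx₀)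

theorem preimage_finConsEquivL_symm_ball {n : ℕ} (c : Fin (n + 1) → ℝ) {r : ℝ} (hr : 0 < r) :
    (Fin.consEquivL ℝ fun _ ↦ ℝ).symm ⁻¹' (ball (c 0) r ×ˢ ball (Fin.tail c) r) = ball c r := by
  ext x
  simp [ball_pi _ hr, Fin.forall_fin_succ, Fin.tail]

theorem volume_preserving_finConsEquivL_symm (n : ℕ) :
    MeasurePreserving (Fin.consEquivL ℝ fun _ : Fin (n + 1) ↦ ℝ).symm := by
  convert volume_preserving_piFinSuccAbove (fun _ : Fin (n + 1) ↦ ℝ) 0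
  ext x : 1
  simp [MeasurableEquiv.piFinSuccAbove]

theorem hasNullAnalyticZeros_ball :
    ∀ (n : ℕ) (c : Fin n → ℝ) (r : ℝ), HasNullAnalyticZeros volume (ball c r)
  | 0, _, _ => by
    rintro g - ⟨x, -, hgx⟩
    refine measure_mono_null (fun z hz ↦ ?_) measure_empty
    exact hgx (Subsingleton.elim x z ▸ hz.2)
  | n + 1, c, r => by
    rcases le_or_gt r 0 with hr | hr
    · simp [ball_eq_empty.2 hr, HasNullAnalyticZeros]
    rw [← preimage_finConsEquivL_symm_ball c hr]
    exact ((hasNullAnalyticZeros_of_isPreconnected (convex_ball (c 0) r).isPreconnected).prod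
      (hasNullAnalyticZeros_ball n (Fin.tail c) r) isOpen_ball isOpen_ball).preimage _
      (volume_preserving_finConsEquivL_symm n)

theorem analytic_zero_set_measure_zero_general
    (d : ℕ)
    (U : Set (EuclideanSpace ℝ (Fin d)))
    (hU_conn : IsConnected U) (hU_open : IsOpen U)
    (f : EuclideanSpace ℝ (Fin d) → ℝ)
    (hf : ∀ x ∈ U, AnalyticAt ℝ f x)
    (hf_ne : ∃ x₀ ∈ U, f x₀ ≠ 0) :
    volume {x | x ∈ U ∧ f x = 0} = 0 := by
  refine hasNullAnalyticZeros_of_locally hU_conn.isPreconnected (fun x hx ↦ ?_) f hf hf_ne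
  let e := EuclideanSpace.equiv (Fin d) ℝ
  obtain ⟨r, hr, hrU⟩ := Metric.isOpen_iff.1 (e.symm.continuous.isOpen_preimage U hU_open) (e x)
    (by simpa using hx)
  refine ⟨e ⁻¹' ball (e x) r, e.continuous.continuousAt.preimage_mem_nhds (ball_mem_nhds _ hr),
    fun y hy ↦ by simpa using hrU hy, ?_⟩
  exact (hasNullAnalyticZeros_ball d (e x) r).preimage e
    (EuclideanSpace.volume_preserving_symm_measurableEquiv_toLp (Fin d))

/-- Zero set theorem (Mityagin): if `f` is real analytic at every point of a
nonempty connected open set `U ⊆ ℝᵈ` and is not identically zero on `U`, then its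
zero set within `U` has Lebesgue measure zero. -/
theorem analytic_zero_set_measure_zero
    (d : ℕ)
    (U : Set (EuclideanSpace ℝ (Fin d)))
    (hU_ne : U.Nonempty) (hU_conn : IsConnected U) (hU_open : IsOpen U)
    (f : EuclideanSpace ℝ (Fin d) → ℝ)
    (hf : ∀ x ∈ U, AnalyticAt ℝ f x)
    (hf_ne : ∃ x₀ ∈ U, f x₀ ≠ 0) :
    volume {x | x ∈ U ∧ f x = 0} = 0 :=
  analytic_zero_set_measure_zero_general d U hU_conn hU_open f hf hf_ne
end

section
/- Let n ≥ r ≥ 1 and let S and U be real n×r matrices with orthonormal columns, i.e. SᵀS = I_r and UᵀU = I_r. Then there exists a real orthogonal r×r matrix O such that ‖S − U·O‖_F ≤ √2 · ‖S·Sᵀ·(I_n − U·Uᵀ)‖_F, where ‖·‖_F denotes the Frobenius norm of a matrix (‖A‖_F² = tr(AᵀA)). -/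
open scoped Matrix

/-- Frobenius norm of a real matrix, `‖A‖_F = √(tr (Aᵀ A))`. -/
noncomputable def frobNorm {m n : Type*} [Fintype m] [Fintype n]
    (A : Matrix m n ℝ) : ℝ :=
  Real.sqrt (Aᵀ * A).trace

/-!
Put `M = Uᵀ S`. Then `‖S - U O‖² = 2 (r - tr (Mᵀ O))` for orthogonal `O`, while
`‖S Sᵀ (I - U Uᵀ)‖² = r - tr (Mᵀ M)`, and `I - Mᵀ M = ((I - U Uᵀ) S)ᵀ ((I - U Uᵀ) S) ⪰ 0`,
so `M` is a contraction. For an orthonormal eigenbasis `qᵢ` of `Mᵀ M` the vectors `M qᵢ` are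
pairwise orthogonal of norms `σᵢ ≤ 1`; an orthogonal `O` sending `qᵢ` to `M qᵢ / σᵢ` whenever
`σᵢ ≠ 0` (a polar factor of `M`) gives `tr (Mᵀ O) = ∑ σᵢ ≥ ∑ σᵢ² = tr (Mᵀ M)`.
-/

open Matrix WithLp
open scoped RealInnerProductSpace

theorem Orthonormal.exists_orthonormalBasis_inner_eq_norm {E ι : Type*} [NormedAddCommGroup E]
    [InnerProductSpace ℝ E] [FiniteDimensional ℝ E] [Fintype ι]
    (hcard : Module.finrank ℝ E = Fintype.card ι) {w : ι → E}
    (hw : Pairwise fun i j => ⟪w i, w j⟫ = 0) :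
    ∃ e : OrthonormalBasis ι ℝ E, ∀ i, ⟪w i, e i⟫ = ‖w i‖ := by
  set s : Set ι := {i | w i ≠ 0}
  have hv : Orthonormal ℝ (s.domRestrict fun i => ‖w i‖⁻¹ • w i) := by
    refine ⟨fun i => norm_smul_inv_norm i.2, fun i j hij => ?_⟩
    simp [real_inner_smul_left, real_inner_smul_right, hw (Subtype.coe_ne_coe.mpr hij)]
  obtain ⟨e, he⟩ := hv.exists_orthonormalBasis_extension_of_card_eq hcard
  refine ⟨e, fun i => ?_⟩
  by_cases hi : w i = 0
  · simp [hi]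
  · rw [he i hi, real_inner_smul_right, real_inner_self_eq_norm_sq]
    field_simp [norm_ne_zero_iff.mpr hi]

namespace Matrix

variable {m ι : Type*} [Fintype m]

theorem inner_toLp_transpose (X Y : Matrix m ι ℝ) (i j : ι) :
    ⟪toLp 2 (Xᵀ i), toLp 2 (Yᵀ j)⟫ = (Xᵀ * Y) i j := by
  simp only [EuclideanSpace.inner_eq_star_dotProduct, star_trivial, mul_apply', dotProduct_comm]
  rfl

theorem norm_toLp_transpose_le_one [DecidableEq ι] {X : Matrix m ι ℝ}
    (hX : (1 - Xᵀ * X).PosSemidef) (i : ι) : ‖toLp 2 (Xᵀ i)‖ ≤ 1 := by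
  have h := hX.diag_nonneg (i := i)
  rw [sub_apply, one_apply_eq, ← inner_toLp_transpose, real_inner_self_eq_norm_sq] at h
  nlinarith [norm_nonneg (toLp 2 (Xᵀ i))]

variable [Fintype ι]

theorem trace_transpose_mul_eq_sum_inner (X Y : Matrix m ι ℝ) :
    (Xᵀ * Y).trace = ∑ i, ⟪toLp 2 (Xᵀ i), toLp 2 (Yᵀ i)⟫ := by
  simp only [inner_toLp_transpose, trace, diag]

theorem trace_transpose_mul_self_sub (X Y : Matrix m ι ℝ) :
    ((X - Y)ᵀ * (X - Y)).trace = (Xᵀ * X).trace - 2 * (Xᵀ * Y).trace + (Yᵀ * Y).trace := by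
  rw [transpose_sub, Matrix.sub_mul, Matrix.mul_sub, Matrix.mul_sub, trace_sub, trace_sub,
    trace_sub, ← trace_transpose (Yᵀ * X), transpose_mul, transpose_transpose]
  ring

variable [DecidableEq ι]

theorem exists_mem_orthogonalGroup_trace_transpose_mul_eq_sum_norm (W : Matrix ι ι ℝ)
    (hW : Pairwise fun i j => (Wᵀ * W) i j = 0) :
    ∃ E ∈ orthogonalGroup ι ℝ, (Wᵀ * E).trace = ∑ i, ‖toLp 2 (Wᵀ i)‖ := by
  obtain ⟨e, he⟩ := Orthonormal.exists_orthonormalBasis_inner_eq_norm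
    (w := fun i => toLp 2 (Wᵀ i)) (by simp)
    fun i j hij => (inner_toLp_transpose W W i j).trans (hW hij)
  set E := (EuclideanSpace.basisFun ι ℝ).toBasis.toMatrix e
  have hE : ∀ i, toLp 2 (Eᵀ i) = e i := fun i => by
    ext k
    simp [E, Module.Basis.toMatrix_apply]
  refine ⟨E, (EuclideanSpace.basisFun ι ℝ).toMatrix_orthonormalBasis_mem_orthogonal e, ?_⟩
  simp only [trace_transpose_mul_eq_sum_inner, hE, he]

theorem exists_mem_orthogonalGroup_trace_le (M : Matrix ι ι ℝ) (hM : (1 - Mᵀ * M).PosSemidef) :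
    ∃ O ∈ orthogonalGroup ι ℝ, (Mᵀ * M).trace ≤ (Mᵀ * O).trace := by
  have hA : (Mᵀ * M).IsHermitian := by
    simpa [conjTranspose_eq_transpose_of_trivial] using isHermitian_conjTranspose_mul_self M
  set B : Matrix ι ι ℝ := ↑hA.eigenvectorUnitary
  have hB : B ∈ orthogonalGroup ι ℝ := hA.eigenvectorUnitary.2
  have hBt : Bᵀ ∈ orthogonalGroup ι ℝ := by
    rw [mem_orthogonalGroup_iff, transpose_transpose, (mem_orthogonalGroup_iff' ι ℝ).mp hB]
  set W := M * B with hW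
  have hWW : Wᵀ * W = Bᵀ * (Mᵀ * M) * B := by
    simp only [W, transpose_mul, Matrix.mul_assoc]
  have hdiag : Wᵀ * W = diagonal hA.eigenvalues := by
    simpa [hWW, star_eq_conjTranspose, conjTranspose_eq_transpose_of_trivial, Matrix.mul_assoc]
      using hA.conjStarAlgAut_star_eigenvectorUnitary
  have hWcontr : (1 - Wᵀ * W).PosSemidef := by
    simpa [conjTranspose_eq_transpose_of_trivial, hWW, Matrix.mul_sub, Matrix.sub_mul,
      (mem_orthogonalGroup_iff' ι ℝ).mp hB] using hM.conjTranspose_mul_mul_same B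
  obtain ⟨E, hE, htrE⟩ := exists_mem_orthogonalGroup_trace_transpose_mul_eq_sum_norm W
    fun i j hij => by simp [hdiag, hij]
  refine ⟨E * Bᵀ, mul_mem hE hBt, ?_⟩
  calc (Mᵀ * M).trace = (Wᵀ * W).trace := by
        rw [hWW, trace_mul_cycle, (mem_orthogonalGroup_iff ι ℝ).mp hB, Matrix.one_mul]
    _ = ∑ i, ‖toLp 2 (Wᵀ i)‖ ^ 2 := by
        simp only [trace_transpose_mul_eq_sum_inner, real_inner_self_eq_norm_sq]
    _ ≤ ∑ i, ‖toLp 2 (Wᵀ i)‖ := Finset.sum_le_sum fun i _ =>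
        pow_le_of_le_one (norm_nonneg _) (norm_toLp_transpose_le_one hWcontr i) two_ne_zero
    _ = (Mᵀ * (E * Bᵀ)).trace := by
        rw [← htrE, hW, transpose_mul, Matrix.mul_assoc, trace_mul_comm, Matrix.mul_assoc]

variable {S U : Matrix m ι ℝ}

omit [Fintype m] [DecidableEq ι] in
theorem transpose_one_sub_mul_transpose [DecidableEq m] : (1 - U * Uᵀ)ᵀ = 1 - U * Uᵀ := by
  rw [transpose_sub, transpose_one, transpose_mul, transpose_transpose]

theorem isIdempotentElem_one_sub_mul_transpose [DecidableEq m] (hU : Uᵀ * U = 1) :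
    IsIdempotentElem (1 - U * Uᵀ) := by
  have hUU : U * Uᵀ * (U * Uᵀ) = U * Uᵀ := by
    rw [Matrix.mul_assoc, ← Matrix.mul_assoc Uᵀ, hU, Matrix.one_mul]
  simp only [IsIdempotentElem, Matrix.sub_mul, Matrix.mul_sub, Matrix.one_mul, Matrix.mul_one,
    hUU, sub_self, sub_zero]

theorem one_sub_transpose_mul_self_transpose_mul [DecidableEq m] (hS : Sᵀ * S = 1)
    (hU : Uᵀ * U = 1) :
    1 - (Uᵀ * S)ᵀ * (Uᵀ * S) = ((1 - U * Uᵀ) * S)ᵀ * ((1 - U * Uᵀ) * S) := by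
  rw [transpose_mul (1 - U * Uᵀ) S, transpose_one_sub_mul_transpose, Matrix.mul_assoc Sᵀ,
    ← Matrix.mul_assoc (1 - U * Uᵀ), (isIdempotentElem_one_sub_mul_transpose hU).eq,
    Matrix.sub_mul, Matrix.mul_sub, Matrix.one_mul, hS, transpose_mul, transpose_transpose]
  simp only [Matrix.mul_assoc]

theorem trace_projection_residual [DecidableEq m] (hS : Sᵀ * S = 1) (hU : Uᵀ * U = 1) :
    ((S * Sᵀ * (1 - U * Uᵀ))ᵀ * (S * Sᵀ * (1 - U * Uᵀ))).trace =
      Fintype.card ι - ((Uᵀ * S)ᵀ * (Uᵀ * S)).trace := by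
  set P := 1 - U * Uᵀ
  have hPt : Pᵀ = P := transpose_one_sub_mul_transpose
  calc ((S * Sᵀ * P)ᵀ * (S * Sᵀ * P)).trace = ((Sᵀ * P) * (Sᵀ * P)ᵀ).trace := by
        rw [Matrix.mul_assoc S, transpose_mul S, Matrix.mul_assoc, ← Matrix.mul_assoc Sᵀ S, hS,
          Matrix.one_mul, trace_mul_comm]
    _ = ((P * S)ᵀ * (P * S)).trace := by
        simp only [transpose_mul, transpose_transpose, hPt, Matrix.mul_assoc]
    _ = Fintype.card ι - ((Uᵀ * S)ᵀ * (Uᵀ * S)).trace := by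
        rw [← one_sub_transpose_mul_self_transpose_mul hS hU, trace_sub, trace_one]

theorem trace_procrustes_residual (hS : Sᵀ * S = 1) (hU : Uᵀ * U = 1) {O : Matrix ι ι ℝ}
    (hO : Oᵀ * O = 1) :
    ((S - U * O)ᵀ * (S - U * O)).trace = 2 * (Fintype.card ι - ((Uᵀ * S)ᵀ * O).trace) := by
  have hUO : (U * O)ᵀ * (U * O) = 1 := by
    rw [transpose_mul, Matrix.mul_assoc, ← Matrix.mul_assoc Uᵀ, hU, Matrix.one_mul, hO]
  rw [trace_transpose_mul_self_sub, hS, hUO, transpose_mul Uᵀ S, transpose_transpose,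
    Matrix.mul_assoc, trace_one]
  ring

end Matrix

theorem procrustes_projection_bound_general
    (n r : ℕ)
    (S U : Matrix (Fin n) (Fin r) ℝ)
    (hS : Sᵀ * S = 1) (hU : Uᵀ * U = 1) :
    ∃ O : Matrix (Fin r) (Fin r) ℝ, Oᵀ * O = 1 ∧ O * Oᵀ = 1 ∧
      frobNorm (S - U * O) ≤ Real.sqrt 2 * frobNorm (S * Sᵀ * (1 - U * Uᵀ)) := by
  have hcontr : (1 - (Uᵀ * S)ᵀ * (Uᵀ * S)).PosSemidef := by
    rw [one_sub_transpose_mul_self_transpose_mul hS hU, ← conjTranspose_eq_transpose_of_trivial]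
    exact posSemidef_conjTranspose_mul_self _
  obtain ⟨O, hO, htr⟩ := exists_mem_orthogonalGroup_trace_le (Uᵀ * S) hcontr
  have hOO : Oᵀ * O = 1 := (mem_orthogonalGroup_iff' _ ℝ).mp hO
  refine ⟨O, hOO, (mem_orthogonalGroup_iff _ ℝ).mp hO, ?_⟩
  rw [frobNorm, frobNorm, trace_procrustes_residual hS hU hOO, trace_projection_residual hS hU,
    ← Real.sqrt_mul zero_le_two]
  exact Real.sqrt_le_sqrt (by linarith)

/-- Procrustes-versus-projection bound: for `n×r` matrices `S`, `U` with
orthonormal columns, some orthogonal `r×r` matrix `O` satisfies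
`‖S − U·O‖_F ≤ √2 · ‖S·Sᵀ·(I − U·Uᵀ)‖_F`. -/
theorem procrustes_projection_bound
    (n r : ℕ) (hr : 1 ≤ r) (hnr : r ≤ n)
    (S U : Matrix (Fin n) (Fin r) ℝ)
    (hS : Sᵀ * S = 1) (hU : Uᵀ * U = 1) :
    ∃ O : Matrix (Fin r) (Fin r) ℝ, Oᵀ * O = 1 ∧ O * Oᵀ = 1 ∧
      frobNorm (S - U * O) ≤ Real.sqrt 2 * frobNorm (S * Sᵀ * (1 - U * Uᵀ)) :=
  procrustes_projection_bound_general n r S U hS hU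
end

section
/- Let g and ĝ be unit vectors in ℝⁿ. Then min(‖g − ĝ‖₂, ‖g + ĝ‖₂) ≤ √2 · ‖g gᵀ (I − ĝ ĝᵀ)‖_F, where g gᵀ and ĝ ĝᵀ denote the rank-one n×n matrices with entries g_i g_j and ĝ_i ĝ_j respectively, and ‖·‖_F denotes the Frobenius norm (‖A‖_F² = tr(AᵀA)). -/
/-!
With `c = ⟪ĝ, g⟫`, the matrix `g gᵀ (I - ĝ ĝᵀ)` is the rank-one matrix `g (g - c ĝ)ᵀ`, whose
Frobenius norm is `‖g - c ĝ‖ = √(1 - c²)`. Choosing the sign of `ĝ` that makes the inner product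
nonnegative, the squared distance is `2 - 2|c| ≤ 2 (1 - c²)`, since `|c| ≤ 1`.
-/

open scoped Matrix

theorem Matrix.vecMulVec_mul_one_sub_vecMulVec {n α : Type*} [Fintype n] [DecidableEq n]
    [CommRing α] (u v w x : n → α) :
    vecMulVec u v * (1 - vecMulVec w x) = vecMulVec u (v - (v ⬝ᵥ w) • x) := by
  rw [mul_sub, mul_one, vecMulVec_mul_vecMulVec, vecMulVec_sub]

theorem EuclideanSpace.dotProduct_self_eq_norm_sq {ι : Type*} [Fintype ι]
    (u : EuclideanSpace ℝ ι) : u ⬝ᵥ u = ‖u‖ ^ 2 := by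
  rw [← real_inner_self_eq_norm_sq]
  rfl

theorem frobNorm_vecMulVec {m n : Type*} [Fintype m] [Fintype n]
    (u : EuclideanSpace ℝ m) (v : EuclideanSpace ℝ n) :
    frobNorm (Matrix.vecMulVec u v) = ‖u‖ * ‖v‖ := by
  rw [frobNorm, Matrix.transpose_vecMulVec, Matrix.vecMulVec_mul_vecMulVec,
    Matrix.trace_vecMulVec, dotProduct_smul, smul_eq_mul,
    EuclideanSpace.dotProduct_self_eq_norm_sq, EuclideanSpace.dotProduct_self_eq_norm_sq,
    ← mul_pow, Real.sqrt_sq (by positivity)]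

open RealInnerProductSpace in
theorem min_norm_sub_norm_add_le_sqrt_two_mul_norm_sub_inner_smul {E : Type*}
    [NormedAddCommGroup E] [InnerProductSpace ℝ E] {x y : E} (hx : ‖x‖ = 1) (hy : ‖y‖ = 1) :
    min ‖x - y‖ ‖x + y‖ ≤ √2 * ‖x - ⟪y, x⟫ • y‖ := by
  set c := ⟪y, x⟫ with hc_def
  have hc : |c| ≤ 1 := by simpa [hx, hy] using abs_real_inner_le_norm y x
  have hproj : ‖x - c • y‖ ^ 2 = 1 - c ^ 2 := by
    rw [norm_sub_sq_real, inner_smul_right, norm_smul, hx, hy, mul_one, Real.norm_eq_abs, sq_abs,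
      real_inner_comm y x, ← hc_def]
    ring
  rw [← Real.sqrt_sq (norm_nonneg (x - c • y)), ← Real.sqrt_mul zero_le_two, hproj]
  apply Real.le_sqrt_of_sq_le
  rcases le_total 0 c with hc_nonneg | hc_nonpos
  · calc min ‖x - y‖ ‖x + y‖ ^ 2 ≤ ‖x - y‖ ^ 2 := by gcongr; exact min_le_left _ _
      _ = 2 - 2 * c := by rw [norm_sub_sq_real, hx, hy, real_inner_comm]; ring
      _ ≤ 2 * (1 - c ^ 2) := by nlinarith [abs_le.mp hc]
  · calc min ‖x - y‖ ‖x + y‖ ^ 2 ≤ ‖x + y‖ ^ 2 := by gcongr; exact min_le_right _ _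
      _ = 2 + 2 * c := by rw [norm_add_sq_real, hx, hy, real_inner_comm]; ring
      _ ≤ 2 * (1 - c ^ 2) := by nlinarith [abs_le.mp hc]

open RealInnerProductSpace in
/-- Rank-one Procrustes bound: for unit vectors `g`, `ĝ`,
`min(‖g − ĝ‖, ‖g + ĝ‖) ≤ √2 · ‖g gᵀ (I − ĝ ĝᵀ)‖_F`. -/
theorem rank_one_procrustes_bound
    (n : ℕ) (g ghat : EuclideanSpace ℝ (Fin n))
    (hg : ‖g‖ = 1) (hghat : ‖ghat‖ = 1) :
    min ‖g - ghat‖ ‖g + ghat‖ ≤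
      Real.sqrt 2 *
        frobNorm (Matrix.vecMulVec (fun i => g i) (fun i => g i) *
          (1 - Matrix.vecMulVec (fun i => ghat i) (fun i => ghat i))) := by
  have hrank_one : Matrix.vecMulVec (fun i => g i) (fun i => g i) *
      (1 - Matrix.vecMulVec (fun i => ghat i) (fun i => ghat i)) =
      Matrix.vecMulVec g (g - ⟪ghat, g⟫ • ghat) := by
    rw [Matrix.vecMulVec_mul_one_sub_vecMulVec]
    -- on `EuclideanSpace ℝ _`, `⟪ghat, g⟫` unfolds to `g ⬝ᵥ star ghat` and `star` is trivial on `ℝ`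
    rfl
  rw [hrank_one, frobNorm_vecMulVec, hg, one_mul]
  exact min_norm_sub_norm_add_le_sqrt_two_mul_norm_sub_inner_smul hg hghat
end
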